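/- arXiv:1803.05050 — 2 statements merged into one kernel-verified Lean document; each statement's English description precedes it below -/
import Mathlib

section
/- Let A ∈ ℝ^{M×N} be a nonzero matrix and consider the column sampling model with c samples and the optimal sampling probability p_j = |A^{(j)}|² / ‖A‖_F² (assuming every column of A is nonzero so that p_j > 0). Then E[‖A·Aᵀ − C·Cᵀ‖_F²] = (1/c)(‖A‖_F⁴ − ‖A·Aᵀ‖_F²). -/
open Finset Matrix

noncomputable def sampledC {M N : ℕ} (A : Matrix (Fin M) (Fin N) ℝ) (c : ℕ)
    (p : Fin N → ℝ) (ω : Fin c → Fin N) : Matrix (Fin M) (Fin c) ℝ :=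
  fun i t => A i (ω t) / Real.sqrt (c * p (ω t))

/-- Squared Frobenius norm of a matrix. -/
def frobSq {m n : ℕ} (B : Matrix (Fin m) (Fin n) ℝ) : ℝ :=
  ∑ i, ∑ j, (B i j) ^ 2

/-- Squared Euclidean norm of the `j`-th column of `A`. -/
def colNormSq {M N : ℕ} (A : Matrix (Fin M) (Fin N) ℝ) (j : Fin N) : ℝ :=
  ∑ i, (A i j) ^ 2

/-!
The error `A Aᵀ - C Cᵀ` is entrywise a centred sum of `c` i.i.d. terms: the `(i, k)` entry of
`C Cᵀ` is `∑ₜ A_{i ωₜ} A_{k ωₜ} / (c p_{ωₜ})`, an unbiased estimator of `(A Aᵀ)_{ik}`. Its mean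
squared error is therefore `c` times the variance of one summand, which for any sampling
probability sums over `(i, k)` to `(1/c)(∑ⱼ |A^{(j)}|⁴ / pⱼ - ‖A Aᵀ‖_F²)`. For
`pⱼ = |A^{(j)}|² / ‖A‖_F²` the first sum collapses to `‖A‖_F⁴`.
-/

noncomputable def iidExpectation {ι : Type*} [Fintype ι] (p : ι → ℝ) (c : ℕ)
    (F : (Fin c → ι) → ℝ) : ℝ :=
  ∑ ω : Fin c → ι, (∏ t, p (ω t)) * F ω

section iidExpectation

variable {ι : Type*} [Fintype ι] (p : ι → ℝ)

@[simp]
lemma iidExpectation_zero (F : (Fin 0 → ι) → ℝ) :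
    iidExpectation p 0 F = F Fin.elim0 := by
  simp [iidExpectation, Subsingleton.elim _ (Fin.elim0 : Fin 0 → ι)]

lemma iidExpectation_succ (c : ℕ) (F : (Fin (c + 1) → ι) → ℝ) :
    iidExpectation p (c + 1) F
      = ∑ j, p j * iidExpectation p c (fun ω => F (Fin.cons j ω)) := by
  rw [iidExpectation, ← (Fin.consEquiv fun _ => ι).sum_comp, Fintype.sum_prod_type]
  simp only [iidExpectation, Fin.prod_univ_succ, Finset.mul_sum, mul_assoc]
  rfl

lemma iidExpectation_sum {κ : Type*} (s : Finset κ) (c : ℕ) (F : κ → (Fin c → ι) → ℝ) :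
    iidExpectation p c (fun ω => ∑ k ∈ s, F k ω) = ∑ k ∈ s, iidExpectation p c (F k) := by
  simp only [iidExpectation, Finset.mul_sum]
  exact Finset.sum_comm

lemma sum_mul_sq_sub (hp : ∑ j, p j = 1) (f : ι → ℝ) (a : ℝ) :
    ∑ j, p j * (a - f j) ^ 2
      = (a - ∑ j, p j * f j) ^ 2 + (∑ j, p j * f j ^ 2 - (∑ j, p j * f j) ^ 2) := by
  have h : ∀ j, p j * (a - f j) ^ 2 = a ^ 2 * p j - 2 * a * (p j * f j) + p j * f j ^ 2 :=
    fun j => by ring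
  simp only [h, Finset.sum_add_distrib, Finset.sum_sub_distrib, ← Finset.mul_sum, hp]
  ring

lemma iidExpectation_sq_sub_sum (hp : ∑ j, p j = 1) (f : ι → ℝ) (c : ℕ) (b : ℝ) :
    iidExpectation p c (fun ω => (b - ∑ t, f (ω t)) ^ 2)
      = (b - c * ∑ j, p j * f j) ^ 2 + c * (∑ j, p j * f j ^ 2 - (∑ j, p j * f j) ^ 2) := by
  induction c generalizing b with
  | zero => simp
  | succ c ih =>
    have hfirst : ∀ j, iidExpectation p c
          (fun ω => (b - ∑ t, f ((Fin.cons j ω : Fin (c + 1) → ι) t)) ^ 2)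
        = (b - c * ∑ j, p j * f j - f j) ^ 2
          + c * (∑ j, p j * f j ^ 2 - (∑ j, p j * f j) ^ 2) := by
      intro j
      simp only [Fin.sum_univ_succ, Fin.cons_zero, Fin.cons_succ, ← sub_sub, ih, sub_right_comm]
    simp only [iidExpectation_succ, hfirst, mul_add, Finset.sum_add_distrib, ← Finset.sum_mul, hp,
      sum_mul_sq_sub p hp]
    push_cast
    ring

end iidExpectation

lemma frobSq_eq_sum_colNormSq {M N : ℕ} (A : Matrix (Fin M) (Fin N) ℝ) :
    frobSq A = ∑ j, colNormSq A j :=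
  Finset.sum_comm

lemma frobSq_pos {M N : ℕ} {A : Matrix (Fin M) (Fin N) ℝ} (hA : A ≠ 0) : 0 < frobSq A := by
  obtain ⟨i, j, hij⟩ : ∃ i j, A i j ≠ 0 := by
    by_contra! h
    exact hA (Matrix.ext h)
  exact Finset.sum_pos' (fun i _ => Finset.sum_nonneg fun j _ => sq_nonneg _)
    ⟨i, Finset.mem_univ _, Finset.sum_pos' (fun j _ => sq_nonneg _)
      ⟨j, Finset.mem_univ _, by positivity⟩⟩

lemma sampledC_mul_transpose_apply {M N : ℕ} (A : Matrix (Fin M) (Fin N) ℝ) (c : ℕ)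
    {p : Fin N → ℝ} (hp : ∀ j, 0 ≤ p j) (ω : Fin c → Fin N) (i k : Fin M) :
    (sampledC A c p ω * (sampledC A c p ω)ᵀ) i k
      = ∑ t, A i (ω t) * A k (ω t) / (c * p (ω t)) := by
  simp only [Matrix.mul_apply, Matrix.transpose_apply, sampledC, div_mul_div_comm,
    Real.mul_self_sqrt (mul_nonneg c.cast_nonneg (hp _))]

lemma iidExpectation_sq_sub_sampledC_apply {M N : ℕ} (A : Matrix (Fin M) (Fin N) ℝ) {c : ℕ}
    (hc : c ≠ 0) {p : Fin N → ℝ} (hp_pos : ∀ j, 0 < p j) (hp_sum : ∑ j, p j = 1) (i k : Fin M) :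
    iidExpectation p c
        (fun ω => ((A * Aᵀ) i k - (sampledC A c p ω * (sampledC A c p ω)ᵀ) i k) ^ 2)
      = (1 / c) * (∑ j, (A i j * A k j) ^ 2 / p j - (A * Aᵀ) i k ^ 2) := by
  have hc' : (c : ℝ) ≠ 0 := Nat.cast_ne_zero.mpr hc
  simp only [sampledC_mul_transpose_apply A c (fun j => (hp_pos j).le)]
  rw [iidExpectation_sq_sub_sum p hp_sum (fun j => A i j * A k j / (c * p j))]
  -- unbiasedness: the bias term `(b - c * mean)²` vanishes
  have hmean : ∑ j, p j * (A i j * A k j / (c * p j)) = (A * Aᵀ) i k / c := by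
    simp only [Matrix.mul_apply, Matrix.transpose_apply, Finset.sum_div]
    refine Finset.sum_congr rfl fun j _ => ?_
    field_simp [(hp_pos j).ne']
  have hsq : ∑ j, p j * (A i j * A k j / (c * p j)) ^ 2
      = 1 / c ^ 2 * ∑ j, (A i j * A k j) ^ 2 / p j := by
    rw [Finset.mul_sum]
    refine Finset.sum_congr rfl fun j _ => ?_
    field_simp [(hp_pos j).ne']
  rw [hmean, hsq]
  field_simp
  ring

theorem iidExpectation_frobSq_sub_sampledC {M N : ℕ} (A : Matrix (Fin M) (Fin N) ℝ) {c : ℕ}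
    (hc : c ≠ 0) {p : Fin N → ℝ} (hp_pos : ∀ j, 0 < p j) (hp_sum : ∑ j, p j = 1) :
    iidExpectation p c (fun ω => frobSq (A * Aᵀ - sampledC A c p ω * (sampledC A c p ω)ᵀ))
      = (1 / c) * (∑ j, colNormSq A j ^ 2 / p j - frobSq (A * Aᵀ)) := by
  have hcols : ∑ i, ∑ k, ∑ j, (A i j * A k j) ^ 2 / p j = ∑ j, colNormSq A j ^ 2 / p j := by
    have hcol : ∀ j, colNormSq A j ^ 2 / p j = ∑ i, ∑ k, (A i j * A k j) ^ 2 / p j := fun j => by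
      simp only [colNormSq, sq (∑ i, A i j ^ 2), Finset.sum_mul_sum, Finset.sum_div, mul_pow]
    simp only [hcol]
    exact (Finset.sum_congr rfl fun i _ => Finset.sum_comm).trans Finset.sum_comm
  simp only [frobSq, Matrix.sub_apply, iidExpectation_sum,
    iidExpectation_sq_sub_sampledC_apply A hc hp_pos hp_sum, ← Finset.mul_sum,
    Finset.sum_sub_distrib, hcols]

/-- With the optimal sampling probability `p_j = |A^{(j)}|² / ‖A‖_F²` (all
columns of the nonzero matrix `A` being nonzero), the expected squared
Frobenius error is exactly `(1/c)(‖A‖_F⁴ − ‖A Aᵀ‖_F²)`. -/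
theorem expectation_frobSq_error_optimal {M N : ℕ}
    (A : Matrix (Fin M) (Fin N) ℝ) (hA : A ≠ 0)
    (hcol : ∀ j, 0 < colNormSq A j)
    (c : ℕ) (hc : 1 ≤ c)
    (p : Fin N → ℝ) (hp : ∀ j, p j = colNormSq A j / frobSq A) :
    ∑ ω : Fin c → Fin N, (∏ t, p (ω t)) *
        frobSq (A * Aᵀ - (sampledC A c p ω) * (sampledC A c p ω)ᵀ)
      = (1 / c) * ((frobSq A) ^ 2 - frobSq (A * Aᵀ)) := by
  have hF : 0 < frobSq A := frobSq_pos hA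
  have hp_pos : ∀ j, 0 < p j := fun j => hp j ▸ div_pos (hcol j) hF
  have hp_sum : ∑ j, p j = 1 := by
    simp only [hp, ← Finset.sum_div, ← frobSq_eq_sum_colNormSq, div_self hF.ne']
  have hopt : ∑ j, colNormSq A j ^ 2 / p j = frobSq A ^ 2 := by
    have h : ∀ j, colNormSq A j ^ 2 / p j = colNormSq A j * frobSq A := fun j => by
      rw [hp j]
      field_simp [(hcol j).ne']
    rw [Finset.sum_congr rfl fun j _ => h j, ← Finset.sum_mul, ← frobSq_eq_sum_colNormSq, sq]
  rw [← hopt]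
  exact iidExpectation_frobSq_sub_sampledC A (by omega) hp_pos hp_sum
end

section
/- Let A ∈ ℝ^{M×N} have all columns nonzero and consider the column sampling model with c samples and the optimal probability p_j = |A^{(j)}|²/‖A‖_F². Then E[‖A·Aᵀ − C·Cᵀ‖_F] ≤ ‖A‖_F² / √c. -/
open Finset Matrix

private lemma sum_pi_prod {c N : ℕ} (H : Fin c → Fin N → ℝ) :
    ∑ ω : Fin c → Fin N, ∏ t, H t (ω t) = ∏ t, ∑ j, H t j := by
  rw [Finset.prod_univ_sum (fun _ => (univ : Finset (Fin N))) H, Fintype.piFinset_univ]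

private lemma pair_exp {c N : ℕ} (p g : Fin N → ℝ) (hsum : ∑ j, p j = 1)
    (hzero : ∑ j, p j * g j = 0) (t s : Fin c) :
    ∑ ω : Fin c → Fin N, (∏ r, p (ω r)) * (g (ω t) * g (ω s))
      = if t = s then ∑ j, p j * g j ^ 2 else 0 := by
  have h1 : ∀ ω : Fin c → Fin N,
      (∏ r, p (ω r)) * (g (ω t) * g (ω s))
        = ∏ r, (p (ω r) * ((if r = t then g (ω r) else 1) * (if r = s then g (ω r) else 1))) := by
    intro ω
    rw [Finset.prod_mul_distrib, Finset.prod_mul_distrib,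
      Finset.prod_ite_eq' univ t (fun r => g (ω r)),
      Finset.prod_ite_eq' univ s (fun r => g (ω r))]
    simp
  rw [Finset.sum_congr rfl (fun ω _ => h1 ω),
    sum_pi_prod (fun r j => p j * ((if r = t then g j else 1) * (if r = s then g j else 1)))]
  by_cases hts : t = s
  · subst hts
    rw [if_pos rfl]
    have h2 : ∀ r : Fin c,
        (∑ j, p j * ((if r = t then g j else 1) * (if r = t then g j else 1)))
          = if r = t then (∑ j, p j * g j ^ 2) else 1 := by
      intro r
      by_cases h : r = t <;> simp [h, hsum, sq, mul_assoc]
    rw [Finset.prod_congr rfl (fun r _ => h2 r),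
      Finset.prod_ite_eq' univ t (fun _ => ∑ j, p j * g j ^ 2)]
    simp
  · rw [if_neg hts]
    apply Finset.prod_eq_zero (Finset.mem_univ t)
    simpa [hts] using hzero

private lemma var_exp {c N : ℕ} (p g : Fin N → ℝ) (hsum : ∑ j, p j = 1)
    (hzero : ∑ j, p j * g j = 0) :
    ∑ ω : Fin c → Fin N, (∏ r, p (ω r)) * (∑ t, g (ω t)) ^ 2
      = c * ∑ j, p j * g j ^ 2 := by
  have expand : ∀ ω : Fin c → Fin N,
      (∏ r, p (ω r)) * (∑ t, g (ω t)) ^ 2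
        = ∑ t, ∑ s, (∏ r, p (ω r)) * (g (ω t) * g (ω s)) := by
    intro ω
    rw [sq, Finset.sum_mul_sum, Finset.mul_sum]
    exact Finset.sum_congr rfl fun t _ => Finset.mul_sum _ _ _
  calc ∑ ω : Fin c → Fin N, (∏ r, p (ω r)) * (∑ t, g (ω t)) ^ 2
      = ∑ ω : Fin c → Fin N, ∑ t, ∑ s, (∏ r, p (ω r)) * (g (ω t) * g (ω s)) :=
        Finset.sum_congr rfl (fun ω _ => expand ω)
    _ = ∑ t, ∑ ω : Fin c → Fin N, ∑ s, (∏ r, p (ω r)) * (g (ω t) * g (ω s)) :=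
        Finset.sum_comm
    _ = ∑ t, ∑ s, ∑ ω : Fin c → Fin N, (∏ r, p (ω r)) * (g (ω t) * g (ω s)) :=
        Finset.sum_congr rfl (fun t _ => Finset.sum_comm)
    _ = ∑ t : Fin c, ∑ s : Fin c, if t = s then (∑ j, p j * g j ^ 2) else 0 :=
        Finset.sum_congr rfl (fun t _ =>
          Finset.sum_congr rfl (fun s _ => pair_exp p g hsum hzero t s))
    _ = ∑ _t : Fin c, ∑ j, p j * g j ^ 2 := by
        refine Finset.sum_congr rfl fun t _ => ?_
        rw [Finset.sum_ite_eq univ t (fun _ => ∑ j, p j * g j ^ 2)]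
        simp
    _ = c * ∑ j, p j * g j ^ 2 := by
        rw [Finset.sum_const, Finset.card_univ, Fintype.card_fin, nsmul_eq_mul]

private lemma entry_bound {c N : ℕ} (hc : 0 < c) (p : Fin N → ℝ) (hp' : ∀ j, 0 < p j)
    (hpsum : ∑ j, p j = 1) (x : Fin N → ℝ) :
    ∑ ω : Fin c → Fin N, (∏ t, p (ω t)) *
        ((∑ j, x j) - ∑ t, x (ω t) / (↑c * p (ω t))) ^ 2
      ≤ (∑ j, x j ^ 2 / p j) / c := by
  have hc0 : (c : ℝ) ≠ 0 := Nat.cast_ne_zero.mpr hc.ne'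
  have hcpos : (0:ℝ) < c := Nat.cast_pos.mpr hc
  set a : ℝ := ∑ j, x j with ha
  set g : Fin N → ℝ := fun j => a - x j / p j with hg
  have hzero : ∑ j, p j * g j = 0 := by
    have h1 : ∀ j, p j * g j = p j * a - x j := by
      intro j
      simp only [hg]
      rw [mul_sub, mul_div_cancel₀ _ (hp' j).ne']
    rw [Finset.sum_congr rfl fun j _ => h1 j, Finset.sum_sub_distrib, ← Finset.sum_mul,
      hpsum, one_mul, ← ha, sub_self]
  have hstep : ∀ ω : Fin c → Fin N,
      a - (∑ t, x (ω t) / (↑c * p (ω t))) = (∑ t, g (ω t)) / c := by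
    intro ω
    rw [Finset.sum_div]
    have h2 : ∀ t : Fin c, g (ω t) / c = a / c - x (ω t) / (↑c * p (ω t)) := by
      intro t
      simp only [hg]
      have hpt : p (ω t) ≠ 0 := (hp' _).ne'
      field_simp
    rw [Finset.sum_congr rfl fun t _ => h2 t, Finset.sum_sub_distrib,
      Finset.sum_const, Finset.card_univ, Fintype.card_fin, nsmul_eq_mul,
      mul_div_assoc']
    rw [mul_div_cancel_left₀ _ hc0]
  have key := var_exp (c := c) p g hpsum hzero
  calc ∑ ω : Fin c → Fin N, (∏ t, p (ω t)) * (a - ∑ t, x (ω t) / (↑c * p (ω t))) ^ 2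
      = ∑ ω : Fin c → Fin N, (∏ t, p (ω t)) * ((∑ t, g (ω t)) ^ 2 / (c:ℝ) ^ 2) := by
        refine Finset.sum_congr rfl fun ω _ => ?_
        rw [hstep ω, div_pow]
    _ = (∑ ω : Fin c → Fin N, (∏ t, p (ω t)) * (∑ t, g (ω t)) ^ 2) / (c:ℝ) ^ 2 := by
        rw [Finset.sum_div]
        exact Finset.sum_congr rfl fun ω _ => (mul_div_assoc _ _ _).symm
    _ = ((c:ℝ) * ∑ j, p j * g j ^ 2) / (c:ℝ) ^ 2 := by rw [key]
    _ = (∑ j, p j * g j ^ 2) / c := by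
        rw [sq]
        field_simp
    _ ≤ (∑ j, x j ^ 2 / p j) / c := by
        have expand : ∀ j, p j * g j ^ 2 = p j * a ^ 2 - 2 * a * x j + x j ^ 2 / p j := by
          intro j
          simp only [hg]
          have hpj : p j ≠ 0 := (hp' j).ne'
          field_simp
          ring
        have hVb : ∑ j, p j * g j ^ 2 ≤ ∑ j, x j ^ 2 / p j := by
          calc ∑ j, p j * g j ^ 2
              = (∑ j, p j) * a ^ 2 - 2 * a * (∑ j, x j) + ∑ j, x j ^ 2 / p j := by
                rw [Finset.sum_congr rfl fun j _ => expand j, Finset.sum_add_distrib,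
                  Finset.sum_sub_distrib, ← Finset.sum_mul, ← Finset.mul_sum]
            _ = ∑ j, x j ^ 2 / p j - a ^ 2 := by rw [hpsum, ← ha]; ring
            _ ≤ ∑ j, x j ^ 2 / p j := by nlinarith [sq_nonneg a]
        gcongr

/-- With the optimal sampling probability `p_j = |A^{(j)}|² / ‖A‖_F²`,
the expected Frobenius error satisfies `E[‖A Aᵀ − C Cᵀ‖_F] ≤ ‖A‖_F² / √c`
(by the exact variance identity and Jensen's inequality). -/
theorem expectation_frob_error_optimal_le {M N : ℕ}
    (A : Matrix (Fin M) (Fin N) ℝ) (hcol : ∀ j, 0 < colNormSq A j)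
    (c : ℕ) (hc : 1 ≤ c)
    (p : Fin N → ℝ) (hp : ∀ j, p j = colNormSq A j / frobSq A) :
    ∑ ω : Fin c → Fin N, (∏ t, p (ω t)) *
        Real.sqrt (frobSq (A * Aᵀ - (sampledC A c p ω) * (sampledC A c p ω)ᵀ))
      ≤ frobSq A / Real.sqrt c := by
  rcases Nat.eq_zero_or_pos N with hN | hN
  · subst hN
    haveI : IsEmpty (Fin c → Fin 0) := ⟨fun ω => (ω ⟨0, hc⟩).elim0⟩
    have hA : frobSq A = 0 := by simp [frobSq]
    rw [Finset.univ_eq_empty, Finset.sum_empty, hA, zero_div]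
  · haveI : Nonempty (Fin N) := Fin.pos_iff_nonempty.mp hN
    have hBF : ∑ j, colNormSq A j = frobSq A := by
      simp only [colNormSq, frobSq]
      exact Finset.sum_comm
    have hF : 0 < frobSq A := by
      rw [← hBF]
      exact Finset.sum_pos (fun j _ => hcol j) Finset.univ_nonempty
    have hp' : ∀ j, 0 < p j := fun j => by rw [hp j]; exact div_pos (hcol j) hF
    have hpsum : ∑ j, p j = 1 := by
      rw [Finset.sum_congr rfl fun j _ => hp j, ← Finset.sum_div, hBF, div_self hF.ne']
    have hW0 : ∀ ω : Fin c → Fin N, 0 ≤ ∏ t, p (ω t) :=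
      fun ω => Finset.prod_nonneg fun t _ => (hp' _).le
    have hX0 : ∀ ω : Fin c → Fin N,
        0 ≤ frobSq (A * Aᵀ - sampledC A c p ω * (sampledC A c p ω)ᵀ) :=
      fun ω => Finset.sum_nonneg fun i _ => Finset.sum_nonneg fun k _ => sq_nonneg _
    have hWsum : ∑ ω : Fin c → Fin N, ∏ t, p (ω t) = 1 := by
      have h := sum_pi_prod (fun _ : Fin c => p)
      simpa [hpsum] using h
    -- expectation of the squared error
    have hEX : ∑ ω : Fin c → Fin N, (∏ t, p (ω t)) *
        frobSq (A * Aᵀ - sampledC A c p ω * (sampledC A c p ω)ᵀ)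
        ≤ frobSq A ^ 2 / c := by
      have hXexpand : ∀ ω : Fin c → Fin N, (∏ t, p (ω t)) *
          frobSq (A * Aᵀ - sampledC A c p ω * (sampledC A c p ω)ᵀ)
            = ∑ i, ∑ k, (∏ t, p (ω t)) *
              ((A * Aᵀ - sampledC A c p ω * (sampledC A c p ω)ᵀ) i k) ^ 2 := by
        intro ω
        rw [frobSq, Finset.mul_sum]
        exact Finset.sum_congr rfl fun i _ => Finset.mul_sum _ _ _
      have hik : ∀ i k : Fin M,
          ∑ ω : Fin c → Fin N, (∏ t, p (ω t)) *
            ((A * Aᵀ - sampledC A c p ω * (sampledC A c p ω)ᵀ) i k) ^ 2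
          ≤ (∑ j, (A i j * A k j) ^ 2 / p j) / c := by
        intro i k
        have hDik : ∀ ω : Fin c → Fin N,
            (A * Aᵀ - sampledC A c p ω * (sampledC A c p ω)ᵀ) i k
              = (∑ j, A i j * A k j) - ∑ t, (A i (ω t) * A k (ω t)) / (↑c * p (ω t)) := by
          intro ω
          rw [Matrix.sub_apply, Matrix.mul_apply, Matrix.mul_apply]
          have e1 : ∑ j, A i j * Aᵀ j k = ∑ j, A i j * A k j :=
            Finset.sum_congr rfl fun j _ => by rw [Matrix.transpose_apply]
          have e2 : ∑ t, sampledC A c p ω i t * (sampledC A c p ω)ᵀ t k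
              = ∑ t, (A i (ω t) * A k (ω t)) / (↑c * p (ω t)) := by
            refine Finset.sum_congr rfl fun t _ => ?_
            simp only [Matrix.transpose_apply, sampledC]
            rw [div_mul_div_comm,
              Real.mul_self_sqrt (mul_nonneg (Nat.cast_nonneg c) (hp' _).le)]
          rw [e1, e2]
        have hb := entry_bound hc p hp' hpsum (fun j => A i j * A k j)
        calc ∑ ω : Fin c → Fin N, (∏ t, p (ω t)) *
              ((A * Aᵀ - sampledC A c p ω * (sampledC A c p ω)ᵀ) i k) ^ 2
            = ∑ ω : Fin c → Fin N, (∏ t, p (ω t)) *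
              ((∑ j, A i j * A k j) - ∑ t, (A i (ω t) * A k (ω t)) / (↑c * p (ω t))) ^ 2 :=
              Finset.sum_congr rfl fun ω _ => by rw [hDik ω]
          _ ≤ _ := hb
      have hfinal : ∑ i, ∑ k, (∑ j, (A i j * A k j) ^ 2 / p j) / (c:ℝ)
          = frobSq A ^ 2 / c := by
        have hinner : ∀ j : Fin N, ∑ i, ∑ k, (A i j * A k j) ^ 2
            = colNormSq A j * colNormSq A j := by
          intro j
          rw [colNormSq, Finset.sum_mul_sum]
          exact Finset.sum_congr rfl fun i _ =>
            Finset.sum_congr rfl fun k _ => mul_pow _ _ _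
        have h0 : ∑ i, ∑ k, (∑ j, (A i j * A k j) ^ 2 / p j) / (c:ℝ)
            = (∑ i, ∑ k, ∑ j, (A i j * A k j) ^ 2 / p j) / (c:ℝ) := by
          rw [Finset.sum_div]
          refine Finset.sum_congr rfl fun i _ => ?_
          rw [Finset.sum_div]
        have hswap3 : ∑ i, ∑ k, ∑ j, (A i j * A k j) ^ 2 / p j
            = ∑ j, ∑ i, ∑ k, (A i j * A k j) ^ 2 / p j := by
          have e1 : ∀ i : Fin M, ∑ k : Fin M, ∑ j : Fin N, (A i j * A k j) ^ 2 / p j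
              = ∑ j : Fin N, ∑ k : Fin M, (A i j * A k j) ^ 2 / p j :=
            fun i => Finset.sum_comm
          rw [Finset.sum_congr rfl fun i _ => e1 i]
          exact Finset.sum_comm
        have h1 : ∀ j : Fin N, ∑ i, ∑ k, (A i j * A k j) ^ 2 / p j
            = colNormSq A j * frobSq A := by
          intro j
          have e2 : ∑ i, ∑ k, (A i j * A k j) ^ 2 / p j
              = (∑ i, ∑ k, (A i j * A k j) ^ 2) / p j := by
            rw [Finset.sum_div]
            refine Finset.sum_congr rfl fun i _ => ?_
            rw [Finset.sum_div]
          rw [e2, hinner j, hp j]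
          have hB : colNormSq A j ≠ 0 := (hcol j).ne'
          field_simp
        rw [h0, hswap3, Finset.sum_congr rfl fun j _ => h1 j, ← Finset.sum_mul, hBF, sq]
      calc ∑ ω : Fin c → Fin N, (∏ t, p (ω t)) *
            frobSq (A * Aᵀ - sampledC A c p ω * (sampledC A c p ω)ᵀ)
          = ∑ ω : Fin c → Fin N, ∑ i, ∑ k, (∏ t, p (ω t)) *
              ((A * Aᵀ - sampledC A c p ω * (sampledC A c p ω)ᵀ) i k) ^ 2 :=
            Finset.sum_congr rfl fun ω _ => hXexpand ω
        _ = ∑ i, ∑ ω : Fin c → Fin N, ∑ k, (∏ t, p (ω t)) *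
              ((A * Aᵀ - sampledC A c p ω * (sampledC A c p ω)ᵀ) i k) ^ 2 :=
            Finset.sum_comm
        _ = ∑ i, ∑ k, ∑ ω : Fin c → Fin N, (∏ t, p (ω t)) *
              ((A * Aᵀ - sampledC A c p ω * (sampledC A c p ω)ᵀ) i k) ^ 2 :=
            Finset.sum_congr rfl fun i _ => Finset.sum_comm
        _ ≤ ∑ i, ∑ k, (∑ j, (A i j * A k j) ^ 2 / p j) / (c:ℝ) :=
            Finset.sum_le_sum fun i _ => Finset.sum_le_sum fun k _ => hik i k
        _ = frobSq A ^ 2 / c := hfinal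
    -- Cauchy–Schwarz (Jensen)
    have hCS : (∑ ω : Fin c → Fin N, (∏ t, p (ω t)) *
        Real.sqrt (frobSq (A * Aᵀ - sampledC A c p ω * (sampledC A c p ω)ᵀ))) ^ 2
        ≤ frobSq A ^ 2 / c := by
      have h1 : ∀ ω : Fin c → Fin N, (∏ t, p (ω t)) *
          Real.sqrt (frobSq (A * Aᵀ - sampledC A c p ω * (sampledC A c p ω)ᵀ))
            = Real.sqrt (∏ t, p (ω t)) *
              Real.sqrt ((∏ t, p (ω t)) *
                frobSq (A * Aᵀ - sampledC A c p ω * (sampledC A c p ω)ᵀ)) := by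
        intro ω
        rw [Real.sqrt_mul (hW0 ω), ← mul_assoc, Real.mul_self_sqrt (hW0 ω)]
      calc (∑ ω : Fin c → Fin N, (∏ t, p (ω t)) *
            Real.sqrt (frobSq (A * Aᵀ - sampledC A c p ω * (sampledC A c p ω)ᵀ))) ^ 2
          = (∑ ω : Fin c → Fin N, Real.sqrt (∏ t, p (ω t)) *
              Real.sqrt ((∏ t, p (ω t)) *
                frobSq (A * Aᵀ - sampledC A c p ω * (sampledC A c p ω)ᵀ))) ^ 2 := by
            rw [Finset.sum_congr rfl fun ω _ => h1 ω]
        _ ≤ (∑ ω : Fin c → Fin N, Real.sqrt (∏ t, p (ω t)) ^ 2) *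
            (∑ ω : Fin c → Fin N, Real.sqrt ((∏ t, p (ω t)) *
                frobSq (A * Aᵀ - sampledC A c p ω * (sampledC A c p ω)ᵀ)) ^ 2) :=
            Finset.sum_mul_sq_le_sq_mul_sq _ _ _
        _ = (∑ ω : Fin c → Fin N, ∏ t, p (ω t)) *
            (∑ ω : Fin c → Fin N, (∏ t, p (ω t)) *
                frobSq (A * Aᵀ - sampledC A c p ω * (sampledC A c p ω)ᵀ)) := by
            rw [Finset.sum_congr rfl fun ω _ => Real.sq_sqrt (hW0 ω),
              Finset.sum_congr rfl fun ω _ => Real.sq_sqrt (mul_nonneg (hW0 ω) (hX0 ω))]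
        _ = ∑ ω : Fin c → Fin N, (∏ t, p (ω t)) *
                frobSq (A * Aᵀ - sampledC A c p ω * (sampledC A c p ω)ᵀ) := by
            rw [hWsum, one_mul]
        _ ≤ frobSq A ^ 2 / c := hEX
    have hLHS0 : 0 ≤ ∑ ω : Fin c → Fin N, (∏ t, p (ω t)) *
        Real.sqrt (frobSq (A * Aᵀ - sampledC A c p ω * (sampledC A c p ω)ᵀ)) :=
      Finset.sum_nonneg fun ω _ => mul_nonneg (hW0 ω) (Real.sqrt_nonneg _)
    have h2 := (Real.le_sqrt hLHS0 (by positivity)).mpr hCS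
    calc ∑ ω : Fin c → Fin N, (∏ t, p (ω t)) *
          Real.sqrt (frobSq (A * Aᵀ - sampledC A c p ω * (sampledC A c p ω)ᵀ))
        ≤ Real.sqrt (frobSq A ^ 2 / c) := h2
      _ = frobSq A / Real.sqrt c := by
          rw [Real.sqrt_div (sq_nonneg _), Real.sqrt_sq hF.le]
end
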